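/- For every 0 < a < 1 and z > 0, the integral ∫₀^∞ e^{-(a+1)θ} (1 - e^{-θ})^{-a} (e^z - e^{-θ})^{-1} dθ equals ((1 - e^{-z})^{-a} - 1) · π / sin(πa). -/

import Mathlib

/-!
Expand `(e^z - e^{-θ})⁻¹ = ∑ₙ e^{-(n+1)z} e^{-nθ}` as a geometric series. After the substitution
`t = e^{-θ}` the `n`-th term integrates to the Beta integral
`e^{-(n+1)z} B(a+n+1, 1-a) = e^{-(n+1)z} Γ(a) Γ(1-a) (a)_{n+1} / (n+1)!`, and
`Γ(a) Γ(1-a) = π / sin(πa)`. All terms are nonnegative, so sum and integral commute, and what is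
left is the binomial series `∑_{m ≥ 1} (a)_m / m! xᵐ = (1-x)^{-a} - 1` at `x = e^{-z}`.
-/

open Real MeasureTheory Set
open scoped Nat

section ExpNegSubstitution

variable {E : Type*} [NormedAddCommGroup E] [NormedSpace ℝ E]

theorem image_exp_neg_Ioi_zero : (fun θ : ℝ => exp (-θ)) '' Ioi 0 = Ioo 0 1 := by
  ext t
  constructor
  · rintro ⟨θ, hθ, rfl⟩
    exact ⟨exp_pos _, exp_lt_one_iff.mpr (neg_lt_zero.mpr hθ)⟩
  · rintro ⟨ht0, ht1⟩
    exact ⟨-log t, neg_pos.mpr (log_neg ht0 ht1), by simp [exp_log ht0]⟩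

theorem hasDerivWithinAt_exp_neg (s : Set ℝ) (θ : ℝ) :
    HasDerivWithinAt (fun θ : ℝ => exp (-θ)) (-exp (-θ)) s θ := by
  simpa using (hasDerivAt_neg θ).exp.hasDerivWithinAt

theorem injective_exp_neg : Function.Injective fun θ : ℝ => exp (-θ) :=
  fun _ _ h => neg_injective (exp_injective h)

theorem integral_comp_exp_neg_Ioi_zero (g : ℝ → E) :
    ∫ θ in Ioi 0, exp (-θ) • g (exp (-θ)) = ∫ t in Ioo 0 1, g t := by
  rw [← image_exp_neg_Ioi_zero, integral_image_eq_integral_abs_deriv_smul measurableSet_Ioi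
    (fun θ _ => hasDerivWithinAt_exp_neg _ θ) injective_exp_neg.injOn]
  simp [abs_of_pos (exp_pos _)]

theorem integrableOn_comp_exp_neg_Ioi_zero_iff (g : ℝ → E) :
    IntegrableOn (fun θ => exp (-θ) • g (exp (-θ))) (Ioi 0) ↔ IntegrableOn g (Ioo 0 1) := by
  rw [← image_exp_neg_Ioi_zero, integrableOn_image_iff_integrableOn_abs_deriv_smul
    measurableSet_Ioi (fun θ _ => hasDerivWithinAt_exp_neg _ θ) injective_exp_neg.injOn]
  simp [abs_of_pos (exp_pos _)]

end ExpNegSubstitution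

theorem Complex.ofReal_cpow_mul_one_sub_cpow {b c x : ℝ} (hx : x ∈ Icc (0 : ℝ) 1) :
    (x : ℂ) ^ ((b : ℂ) - 1) * (1 - (x : ℂ)) ^ ((c : ℂ) - 1) =
      ((x ^ (b - 1) * (1 - x) ^ (c - 1) : ℝ) : ℂ) := by
  push_cast [Complex.ofReal_cpow hx.1, Complex.ofReal_cpow (sub_nonneg.mpr hx.2)]
  rfl

theorem Complex.betaIntegral_ofReal (b c : ℝ) :
    betaIntegral b c = ((∫ t in (0 : ℝ)..1, t ^ (b - 1) * (1 - t) ^ (c - 1) : ℝ) : ℂ) := by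
  rw [betaIntegral, ← intervalIntegral.integral_ofReal]
  refine intervalIntegral.integral_congr fun x hx => ?_
  rw [uIcc_of_le zero_le_one] at hx
  exact ofReal_cpow_mul_one_sub_cpow hx

theorem integral_rpow_mul_one_sub_rpow {b c : ℝ} (hb : 0 < b) (hc : 0 < c) :
    ∫ t in Ioo 0 1, t ^ (b - 1) * (1 - t) ^ (c - 1) = Gamma b * Gamma c / Gamma (b + c) := by
  have h := Complex.betaIntegral_eq_Gamma_mul_div b c (by simpa) (by simpa)
  rw [Complex.betaIntegral_ofReal, ← Complex.ofReal_add, Complex.Gamma_ofReal,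
    Complex.Gamma_ofReal, Complex.Gamma_ofReal] at h
  rw [← integral_Ioc_eq_integral_Ioo, ← intervalIntegral.integral_of_le zero_le_one]
  exact_mod_cast h

theorem integrableOn_rpow_mul_one_sub_rpow {b c : ℝ} (hb : 0 < b) (hc : 0 < c) :
    IntegrableOn (fun t : ℝ => t ^ (b - 1) * (1 - t) ^ (c - 1)) (Ioo 0 1) := by
  have h := Complex.betaIntegral_convergent (u := b) (v := c) (by simpa) (by simpa)
  rw [intervalIntegrable_iff_integrableOn_Ioc_of_le zero_le_one] at h
  have h_re : Integrable (fun t : ℝ => t ^ (b - 1) * (1 - t) ^ (c - 1))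
      (volume.restrict (Ioc 0 1)) := by
    simpa using (h.congr_fun (fun x hx =>
      Complex.ofReal_cpow_mul_one_sub_cpow (Ioc_subset_Icc_self hx)) measurableSet_Ioc).re
  exact IntegrableOn.mono_set h_re Ioo_subset_Ioc_self

theorem exp_neg_smul_rpow_mul_one_sub_rpow (b c θ : ℝ) :
    exp (-θ) • (exp (-θ) ^ (b - 1) * (1 - exp (-θ)) ^ (c - 1)) =
      exp (-(b * θ)) * (1 - exp (-θ)) ^ (c - 1) := by
  rw [smul_eq_mul, ← mul_assoc, ← exp_mul, ← exp_add]
  ring_nf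

theorem integral_exp_neg_mul_mul_one_sub_exp_neg_rpow {b c : ℝ} (hb : 0 < b) (hc : 0 < c) :
    ∫ θ in Ioi 0, exp (-(b * θ)) * (1 - exp (-θ)) ^ (c - 1) =
      Gamma b * Gamma c / Gamma (b + c) := by
  simpa only [exp_neg_smul_rpow_mul_one_sub_rpow] using
    (integral_comp_exp_neg_Ioi_zero fun t => t ^ (b - 1) * (1 - t) ^ (c - 1)).trans
      (integral_rpow_mul_one_sub_rpow hb hc)

theorem integrableOn_exp_neg_mul_mul_one_sub_exp_neg_rpow {b c : ℝ} (hb : 0 < b) (hc : 0 < c) :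
    IntegrableOn (fun θ => exp (-(b * θ)) * (1 - exp (-θ)) ^ (c - 1)) (Ioi 0) := by
  simpa only [exp_neg_smul_rpow_mul_one_sub_rpow] using
    (integrableOn_comp_exp_neg_Ioi_zero_iff fun t => t ^ (b - 1) * (1 - t) ^ (c - 1)).mpr
      (integrableOn_rpow_mul_one_sub_rpow hb hc)

theorem Real.Gamma_add_nat_eq_mul_ascPochhammer {a : ℝ} (ha : ∀ k : ℕ, a ≠ -k) (n : ℕ) :
    Gamma (a + n) = Gamma a * (ascPochhammer ℝ n).eval a := by
  induction n with
  | zero => simp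
  | succ n ih =>
    have hn : a + n ≠ 0 := fun h => ha n (eq_neg_of_add_eq_zero_left h)
    rw [Nat.cast_succ, ← add_assoc, Gamma_add_one hn, ih, ascPochhammer_succ_eval]
    ring

theorem Ring.choose_add_nat_sub_one_eq {K : Type*} [Field K] [CharZero K] (a : K) (n : ℕ) :
    Ring.choose (a + n - 1) n = (ascPochhammer K n).eval a / n ! := by
  rw [← Ring.multichoose_eq, eq_div_iff (by exact_mod_cast n.factorial_ne_zero), mul_comm,
    ← nsmul_eq_mul, Ring.factorial_nsmul_multichoose_eq_ascPochhammer,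
    Polynomial.ascPochhammer_smeval_eq_eval]

theorem Real.Gamma_add_nat_mul_Gamma_one_sub_div {a : ℝ} (ha : ∀ k : ℕ, a ≠ -k) (n : ℕ) :
    Gamma (a + n) * Gamma (1 - a) / Gamma (n + 1) =
      π / sin (π * a) * Ring.choose (a + n - 1) n := by
  rw [Gamma_add_nat_eq_mul_ascPochhammer ha, Gamma_nat_eq_factorial,
    Ring.choose_add_nat_sub_one_eq, ← Gamma_mul_Gamma_one_sub]
  ring

theorem hasSum_choose_mul_pow_one_sub_rpow_neg (a : ℝ) {x : ℝ} (hx : |x| < 1) :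
    HasSum (fun n : ℕ => Ring.choose (a + n - 1) n * x ^ n) ((1 - x) ^ (-a)) := by
  have h := (one_div_one_sub_rpow_hasFPowerSeriesOnBall_zero a).hasSum
    (y := x) (by simpa [enorm_eq_nnnorm, ← NNReal.coe_lt_coe] using hx)
  rw [rpow_neg (by linarith [le_abs_self x])]
  simpa [FormalMultilinearSeries.ofScalars_apply_eq, mul_comm] using h

theorem integral_exp_neg_add_nat_mul_mul_one_sub_exp_neg_rpow_neg {a : ℝ} (ha0 : 0 < a)
    (ha1 : a < 1) (n : ℕ) :
    ∫ θ in Ioi 0, exp (-((a + n) * θ)) * (1 - exp (-θ)) ^ (-a) =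
      π / sin (π * a) * Ring.choose (a + n - 1) n := by
  have ha : ∀ k : ℕ, a ≠ -k := fun k => ((neg_nonpos.mpr k.cast_nonneg).trans_lt ha0).ne'
  have h := integral_exp_neg_mul_mul_one_sub_exp_neg_rpow (b := a + n) (c := 1 - a)
    (by positivity) (by linarith)
  rw [sub_sub_cancel_left, show a + n + (1 - a) = n + 1 by ring] at h
  rw [h, Gamma_add_nat_mul_Gamma_one_sub_div ha]

theorem integrableOn_exp_neg_add_nat_mul_mul_one_sub_exp_neg_rpow_neg {a : ℝ} (ha0 : 0 < a)
    (ha1 : a < 1) (n : ℕ) :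
    IntegrableOn (fun θ => exp (-((a + n) * θ)) * (1 - exp (-θ)) ^ (-a)) (Ioi 0) := by
  simpa only [sub_sub_cancel_left] using
    integrableOn_exp_neg_mul_mul_one_sub_exp_neg_rpow (b := a + n) (c := 1 - a)
      (by positivity) (by linarith)

theorem exp_neg_mul_mul_one_sub_exp_neg_rpow_nonneg (b r : ℝ) {θ : ℝ} (hθ : 0 ≤ θ) :
    0 ≤ exp (-(b * θ)) * (1 - exp (-θ)) ^ r :=
  mul_nonneg (exp_pos _).le <|
    rpow_nonneg (sub_nonneg.mpr (exp_le_one_iff.mpr (neg_nonpos.mpr hθ))) _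

theorem hasSum_inv_pow_succ_mul_pow {𝕜 : Type*} [NormedField 𝕜] [CompleteSpace 𝕜] {w y : 𝕜}
    (h : ‖y‖ < ‖w‖) : HasSum (fun n : ℕ => w⁻¹ ^ (n + 1) * y ^ n) (w - y)⁻¹ := by
  have hw : w ≠ 0 := norm_pos_iff.mp ((norm_nonneg y).trans_lt h)
  have hwy : w - y ≠ 0 := sub_ne_zero.mpr fun hwy => h.ne (by rw [hwy])
  have hr : ‖y / w‖ < 1 := by rwa [norm_div, div_lt_one (norm_pos_iff.mpr hw)]
  have h_geom := (hasSum_geometric_of_norm_lt_one hr).mul_left w⁻¹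
  rw [show w⁻¹ * (1 - y / w)⁻¹ = (w - y)⁻¹ by field_simp] at h_geom
  refine h_geom.congr_fun fun n => ?_
  rw [div_eq_mul_inv, mul_pow, pow_succ]
  ring

theorem hasSum_exp_neg_pow_succ_mul_mul_inv_exp_sub_exp_neg {a z θ : ℝ} (hθz : -θ < z) :
    HasSum (fun n : ℕ => exp (-z) ^ (n + 1) *
        (exp (-((a + (n + 1 : ℕ)) * θ)) * (1 - exp (-θ)) ^ (-a)))
      (exp (-(a + 1) * θ) * (1 - exp (-θ)) ^ (-a) * (exp z - exp (-θ))⁻¹) := by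
  have h_norm : ‖exp (-θ)‖ < ‖exp z‖ := by
    simpa only [norm_of_nonneg (exp_pos _).le, exp_lt_exp] using hθz
  refine ((hasSum_inv_pow_succ_mul_pow h_norm).mul_left _).congr_fun fun n => ?_
  have h_exp : exp (-((a + (n + 1 : ℕ)) * θ)) = exp (-(a + 1) * θ) * exp (-θ) ^ n := by
    rw [← exp_nat_mul, ← exp_add]
    push_cast
    ring_nf
  rw [h_exp, ← exp_neg]
  ring

theorem stmt_0 (a z : ℝ) (ha0 : 0 < a) (ha1 : a < 1) (hz : 0 < z) :
    ∫ θ in Set.Ioi (0:ℝ),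
      Real.exp (-(a+1)*θ) * (1 - Real.exp (-θ)) ^ (-a) * (Real.exp z - Real.exp (-θ))⁻¹
    = ((1 - Real.exp (-z)) ^ (-a) - 1) * π / Real.sin (π * a) := by
  set x := exp (-z)
  have hx : |x| < 1 := by
    rw [abs_of_pos (exp_pos _)]
    exact exp_lt_one_iff.mpr (neg_lt_zero.mpr hz)
  let F : ℕ → ℝ → ℝ := fun n θ =>
    x ^ (n + 1) * (exp (-((a + (n + 1 : ℕ)) * θ)) * (1 - exp (-θ)) ^ (-a))
  have hF_int (n : ℕ) : IntegrableOn (F n) (Ioi 0) :=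
    (integrableOn_exp_neg_add_nat_mul_mul_one_sub_exp_neg_rpow_neg ha0 ha1 (n + 1)).const_mul _
  have hF_norm (n : ℕ) : ∫ θ in Ioi 0, ‖F n θ‖ = ∫ θ in Ioi 0, F n θ :=
    setIntegral_congr_fun measurableSet_Ioi fun θ hθ => norm_of_nonneg <|
      mul_nonneg (pow_nonneg (exp_pos _).le _) <|
        exp_neg_mul_mul_one_sub_exp_neg_rpow_nonneg _ _ (mem_Ioi.mp hθ).le
  have hF_sum :
      HasSum (fun n => ∫ θ in Ioi 0, F n θ) (π / sin (π * a) * ((1 - x) ^ (-a) - 1)) := by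
    simp only [F, integral_const_mul,
      integral_exp_neg_add_nat_mul_mul_one_sub_exp_neg_rpow_neg ha0 ha1]
    have h := (hasSum_nat_add_iff' 1).mpr (hasSum_choose_mul_pow_one_sub_rpow_neg a hx)
    simpa [mul_comm, mul_left_comm] using h.mul_left (π / sin (π * a))
  calc _ = ∫ θ in Ioi 0, ∑' n, F n θ :=
        setIntegral_congr_fun measurableSet_Ioi fun θ hθ =>
          (hasSum_exp_neg_pow_succ_mul_mul_inv_exp_sub_exp_neg
            (by linarith [mem_Ioi.mp hθ])).tsum_eq.symm
    _ = π / sin (π * a) * ((1 - x) ^ (-a) - 1) :=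
        (hasSum_integral_of_summable_integral_norm hF_int
          (by simpa only [hF_norm] using hF_sum.summable)).unique hF_sum
    _ = _ := by ring
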